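/- arXiv:2410.08304 — 5 statements merged into one kernel-verified Lean document; each statement's English description precedes it below -/
import Mathlib

section
/- If V ∈ C¹(ℝⁿ, ℝ₊) satisfies V(0) = 0, V(x) > 0 for x ≠ 0, V(x) → +∞ as ‖x‖ → +∞, and ∇V(x) · f(x) ≤ 0 for all x ≠ 0, where f ∈ C¹(ℝⁿ, ℝⁿ) with f(0) = 0, then the system ẋ = f(x) is stable at the origin: for every ε > 0 there exists η > 0 such that every solution with ‖x(0)‖ < η satisfies ‖x(t)‖ ≤ ε for all t ≥ 0. -/
/-!
The Lyapunov function decreases along trajectories. By compactness, `V` has a lower bound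
`m > 0` on the sphere of radius `ε`. A trajectory starting where `V < m` keeps
`V < m`, so by the intermediate value theorem it can never reach that sphere; continuity of `V`
at `0` makes `V < m` hold on a small ball around the origin.
-/

open Filter Set Metric

theorem antitoneOn_comp_of_fderiv_nonpos {E : Type*} [NormedAddCommGroup E] [NormedSpace ℝ E]
    {V : E → ℝ} {f : E → E} {x : ℝ → E} (hV : Differentiable ℝ V)
    (hVf : ∀ y, fderiv ℝ V y (f y) ≤ 0) (hx : ∀ t, 0 ≤ t → HasDerivAt x (f (x t)) t) :
    AntitoneOn (V ∘ x) (Ici 0) := by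
  have hderiv : ∀ t, 0 ≤ t → HasDerivAt (V ∘ x) (fderiv ℝ V (x t) (f (x t))) t :=
    fun t ht => (hV (x t)).hasFDerivAt.comp_hasDerivAt t (hx t ht)
  refine antitoneOn_of_hasDerivWithinAt_nonpos (convex_Ici 0)
    (fun t ht => (hderiv t ht).continuousAt.continuousWithinAt)
    (fun t ht => (hderiv t (interior_subset ht)).hasDerivWithinAt) (fun t _ => hVf _)

theorem norm_le_of_continuousOn_of_forall_notMem_sphere {E : Type*} [SeminormedAddCommGroup E]
    {x : ℝ → E} {ε t : ℝ} (ht : 0 ≤ t) (hx : ContinuousOn x (Icc 0 t)) (hx0 : ‖x 0‖ ≤ ε)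
    (hsphere : ∀ s ∈ Icc 0 t, x s ∉ sphere 0 ε) : ‖x t‖ ≤ ε := by
  by_contra! hxt
  obtain ⟨s, hs, hxs⟩ := intermediate_value_Icc ht (continuous_norm.comp_continuousOn hx)
    ⟨hx0, hxt.le⟩
  exact hsphere s hs (mem_sphere_zero_iff_norm.mpr hxs)

theorem lyapunov_stability_general {n : ℕ}
    (f : EuclideanSpace ℝ (Fin n) → EuclideanSpace ℝ (Fin n))
    (hf0 : f 0 = 0)
    (V : EuclideanSpace ℝ (Fin n) → ℝ) (hVC : ContDiff ℝ 1 V)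
    (hV0 : V 0 = 0) (hVpos : ∀ x, x ≠ 0 → 0 < V x)
    (hVdec : ∀ x, x ≠ 0 → ∑ i, gradient V x i * f x i ≤ 0) :
    ∀ ε > (0 : ℝ), ∃ η > (0 : ℝ), ∀ x : ℝ → EuclideanSpace ℝ (Fin n),
      (∀ t, 0 ≤ t → HasDerivAt x (f (x t)) t) → ‖x 0‖ < η →
      ∀ t, 0 ≤ t → ‖x t‖ ≤ ε := by
  intro ε hε
  obtain ⟨m, hm, hmV⟩ := (isCompact_sphere 0 ε).exists_forall_le' hVC.continuous.continuousOn
    fun y hy => hVpos y (ne_zero_of_mem_sphere hε.ne' ⟨y, hy⟩)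
  obtain ⟨δ, hδ, hVδ⟩ := Metric.eventually_nhds_iff.mp
    ((hVC.continuous.tendsto' 0 0 hV0).eventually (gt_mem_nhds hm))
  have hVf : ∀ y, fderiv ℝ V y (f y) ≤ 0 := by
    intro y
    rcases eq_or_ne y 0 with rfl | hy
    · simp [hf0]
    · simpa [← inner_gradient_left, PiLp.inner_apply, mul_comm] using hVdec y hy
  refine ⟨min δ ε, lt_min hδ hε, fun x hx hx0 t ht => ?_⟩
  have hVx0 : V (x 0) < m := hVδ (by simpa using hx0.trans_le (min_le_left _ _))
  have hanti := antitoneOn_comp_of_fderiv_nonpos (hVC.differentiable one_ne_zero) hVf hx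
  refine norm_le_of_continuousOn_of_forall_notMem_sphere ht
    (fun s hs => (hx s hs.1).continuousAt.continuousWithinAt) (hx0.le.trans (min_le_right _ _))
    fun s hs hsphere => ?_
  exact ((hanti self_mem_Ici hs.1 hs.1).trans_lt hVx0).not_ge (hmV _ hsphere)

/-- Lyapunov's theorem (1892): existence of a global Lyapunov function implies
stability of the origin for the system `ẋ = f(x)`. -/
theorem lyapunov_stability {n : ℕ}
    (f : EuclideanSpace ℝ (Fin n) → EuclideanSpace ℝ (Fin n))
    (hf : ContDiff ℝ 1 f) (hf0 : f 0 = 0)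
    (V : EuclideanSpace ℝ (Fin n) → ℝ) (hVC : ContDiff ℝ 1 V)
    (hV0 : V 0 = 0) (hVpos : ∀ x, x ≠ 0 → 0 < V x)
    (hVinf : Tendsto V (comap norm atTop) atTop)
    (hVdec : ∀ x, x ≠ 0 → ∑ i, gradient V x i * f x i ≤ 0) :
    ∀ ε > (0 : ℝ), ∃ η > (0 : ℝ), ∀ x : ℝ → EuclideanSpace ℝ (Fin n),
      (∀ t, 0 ≤ t → HasDerivAt x (f (x t)) t) → ‖x 0‖ < η →
      ∀ t, 0 ≤ t → ‖x t‖ ≤ ε :=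
  lyapunov_stability_general f hf0 V hVC hV0 hVpos hVdec
end

section
/- The function V(x₀, x₁) = ln(1 + 5x₀²) + x₁² is a global Lyapunov function for the system ẋ₀ = -x₀ + x₀x₁, ẋ₁ = -x₁: it satisfies V(0) = 0, V(x) > 0 for x ≠ 0, V(x) → ∞ as ‖x‖ → ∞, and ∇V(x) · f(x) = (-5x₀² - 5x₀²x₁² - 5(x₀ - x₀x₁)² - 2x₁²)/(1 + 5x₀²) ≤ 0 for all (x₀, x₁). -/
open Filter Real

/-! The Lie derivative `∑ i, ∇V i * f i` is `DV(x) (f x)`, so it is read off the chain rule.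
`V` is radially unbounded because `V x ≥ log (1 + ‖x‖²)`, by `1 + ‖x‖² ≤ (1 + 5 x₀²)(1 + x₁²)`
and `log (1 + t) ≤ t`. -/

lemma sum_gradient_mul_eq_fderiv {ι : Type*} [Fintype ι] (g : EuclideanSpace ℝ ι → ℝ)
    (x v : EuclideanSpace ℝ ι) : ∑ i, gradient g x i * v i = fderiv ℝ g x v := by
  rw [gradient, ← InnerProductSpace.toDual_symm_apply, PiLp.inner_apply]
  simp [mul_comm]

lemma hasFDerivAt_log_one_add_mul_sq_add_sq {ι : Type*} [Fintype ι] {c : ℝ} (hc : 0 ≤ c)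
    (i j : ι) (x : EuclideanSpace ℝ ι) :
    HasFDerivAt (fun y : EuclideanSpace ℝ ι => log (1 + c * y i ^ 2) + y j ^ 2)
      ((2 * c * x i / (1 + c * x i ^ 2)) • EuclideanSpace.proj (𝕜 := ℝ) i
        + (2 * x j) • EuclideanSpace.proj (𝕜 := ℝ) j) x := by
  have hi := (EuclideanSpace.proj (𝕜 := ℝ) i).hasFDerivAt (x := x)
  have hj := (EuclideanSpace.proj (𝕜 := ℝ) j).hasFDerivAt (x := x)
  refine ((((hi.pow 2).const_mul c).const_add 1).log (by positivity)).add (hj.pow 2)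
    |>.congr_fderiv ?_
  ext v
  simp only [PiLp.proj_apply, add_apply, smul_apply,
    smul_eq_mul, nsmul_eq_mul, Nat.cast_ofNat, pow_one, Nat.add_one_sub_one]
  ring

lemma log_one_add_mul_sq_add_sq_pos {c : ℝ} (hc : 0 < c) {a b : ℝ} (h : a ≠ 0 ∨ b ≠ 0) :
    0 < log (1 + c * a ^ 2) + b ^ 2 := by
  rcases h with ha | hb
  · have : 1 < 1 + c * a ^ 2 := by have := sq_pos_of_ne_zero ha; nlinarith
    exact add_pos_of_pos_of_nonneg (log_pos this) (sq_nonneg b)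
  · have : 1 ≤ 1 + c * a ^ 2 := by have := sq_nonneg a; nlinarith
    exact add_pos_of_nonneg_of_pos (log_nonneg this) (sq_pos_of_ne_zero hb)

lemma log_one_add_sq_add_sq_le {c : ℝ} (hc : 1 ≤ c) (a b : ℝ) :
    log (1 + (a ^ 2 + b ^ 2)) ≤ log (1 + c * a ^ 2) + b ^ 2 := by
  have ha : 0 < 1 + c * a ^ 2 := by nlinarith [sq_nonneg a]
  have hb : 0 < 1 + b ^ 2 := by positivity
  calc log (1 + (a ^ 2 + b ^ 2)) ≤ log ((1 + c * a ^ 2) * (1 + b ^ 2)) :=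
        log_le_log (by positivity) (by nlinarith [mul_nonneg (sq_nonneg a) (sq_nonneg b)])
    _ = log (1 + c * a ^ 2) + log (1 + b ^ 2) := log_mul ha.ne' hb.ne'
    _ ≤ log (1 + c * a ^ 2) + b ^ 2 := by linarith [log_le_sub_one_of_pos hb]

lemma tendsto_log_one_add_sq_norm {E : Type*} [Norm E] :
    Tendsto (fun x : E => log (1 + ‖x‖ ^ 2)) (comap norm atTop) atTop :=
  (tendsto_log_atTop.comp <| tendsto_atTop_add_const_left _ 1 <|
    tendsto_pow_atTop two_ne_zero).comp tendsto_comap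

/-- `V(x₀,x₁) = ln(1+5x₀²) + x₁²` is a global Lyapunov function for the system
`ẋ₀ = -x₀ + x₀x₁, ẋ₁ = -x₁`. -/
theorem log_lyapunov_function
    (V : EuclideanSpace ℝ (Fin 2) → ℝ)
    (hV : ∀ x, V x = Real.log (1 + 5 * (x 0) ^ 2) + (x 1) ^ 2)
    (f : EuclideanSpace ℝ (Fin 2) → EuclideanSpace ℝ (Fin 2))
    (hf : ∀ x, f x 0 = -(x 0) + x 0 * x 1 ∧ f x 1 = -(x 1)) :
    V 0 = 0 ∧ (∀ x, x ≠ 0 → 0 < V x) ∧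
    Tendsto V (comap norm atTop) atTop ∧
    ∀ x, (∑ i, gradient V x i * f x i =
        (-5 * (x 0) ^ 2 - 5 * (x 0) ^ 2 * (x 1) ^ 2
          - 5 * (x 0 - x 0 * x 1) ^ 2 - 2 * (x 1) ^ 2) / (1 + 5 * (x 0) ^ 2)) ∧
      ∑ i, gradient V x i * f x i ≤ 0 := by
  have hLie (x : EuclideanSpace ℝ (Fin 2)) : ∑ i, gradient V x i * f x i =
      (-5 * (x 0) ^ 2 - 5 * (x 0) ^ 2 * (x 1) ^ 2
        - 5 * (x 0 - x 0 * x 1) ^ 2 - 2 * (x 1) ^ 2) / (1 + 5 * (x 0) ^ 2) := by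
    rw [sum_gradient_mul_eq_fderiv, funext hV,
      (hasFDerivAt_log_one_add_mul_sq_add_sq (by norm_num) 0 1 x).fderiv]
    have : 1 + 5 * x 0 ^ 2 ≠ 0 := by positivity
    simp only [add_apply, smul_apply, PiLp.proj_apply, smul_eq_mul, (hf x).1, (hf x).2]
    field_simp
    ring
  refine ⟨by simp [hV], fun x hx => ?_, ?_, fun x => ⟨hLie x, ?_⟩⟩
  · rw [hV]
    refine log_one_add_mul_sq_add_sq_pos (by norm_num) ?_
    by_contra! h
    exact hx (by ext i; fin_cases i <;> simp [h])
  · refine tendsto_atTop_mono (fun x => ?_) tendsto_log_one_add_sq_norm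
    rw [hV, EuclideanSpace.real_norm_sq_eq, Fin.sum_univ_two]
    exact log_one_add_sq_add_sq_le (by norm_num) (x 0) (x 1)
  · rw [hLie]
    exact div_nonpos_of_nonpos_of_nonneg (by nlinarith [sq_nonneg (x 0 * x 1)]) (by positivity)
end

section
/- The system ẋ₀ = 2x₁², ẋ₁ = -10x₁ admits no Lyapunov function of the form V(x₀,x₁) = Σᵢ₌₁ⁿ aᵢx₀ⁱ + Σⱼ₌₁ᵐ bⱼx₁ʲ satisfying V(0)=0, V(x) > 0 for x ≠ 0, and ∇V(x)·f(x) ≤ 0 for all x. -/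
open Polynomial Filter

/-- The system `ẋ₀ = 2x₁², ẋ₁ = -10x₁` admits no diagonal polynomial Lyapunov
function `V(x₀,x₁) = ∑ᵢ aᵢx₀ⁱ + ∑ⱼ bⱼx₁ʲ`. -/
theorem no_diagonal_polynomial_lyapunov :
    ¬ ∃ (n m : ℕ) (a b : ℕ → ℝ),
      (∀ x₀ x₁ : ℝ, (x₀, x₁) ≠ (0, 0) →
        0 < ∑ i ∈ Finset.Icc 1 n, a i * x₀ ^ i
            + ∑ j ∈ Finset.Icc 1 m, b j * x₁ ^ j) ∧
      (∀ x₀ x₁ : ℝ,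
        (∑ i ∈ Finset.Icc 1 n, (i : ℝ) * a i * x₀ ^ (i - 1)) * (2 * x₁ ^ 2)
          + (∑ j ∈ Finset.Icc 1 m, (j : ℝ) * b j * x₁ ^ (j - 1)) * (-10 * x₁)
          ≤ 0) := by
  rintro ⟨n, m, a, b, hpos, hder⟩
  -- the polynomial P(x) = ∑ aᵢ xⁱ
  set p : ℝ[X] := ∑ i ∈ Finset.Icc 1 n, C (a i) * X ^ i with hp
  have hev : ∀ x : ℝ, p.eval x = ∑ i ∈ Finset.Icc 1 n, a i * x ^ i := by
    intro x; simp [hp, eval_finset_sum]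
  -- positivity of P away from 0
  have hppos : ∀ x : ℝ, x ≠ 0 → 0 < p.eval x := by
    intro x hx
    have := hpos x 0 (by simp [hx])
    have hz : ∑ j ∈ Finset.Icc 1 m, b j * (0:ℝ) ^ j = 0 := by
      apply Finset.sum_eq_zero
      intro j hj
      have : j ≠ 0 := by
        have := (Finset.mem_Icc.mp hj).1; omega
      simp [zero_pow this]
    rw [hev]; linarith
  -- P(0) = 0
  have hp0 : p.eval 0 = 0 := by
    rw [hev]
    apply Finset.sum_eq_zero
    intro i hi
    have : i ≠ 0 := by have := (Finset.mem_Icc.mp hi).1; omega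
    simp [zero_pow this]
  -- derivative evaluation
  have hdev : ∀ x : ℝ, (derivative p).eval x
      = ∑ i ∈ Finset.Icc 1 n, (i : ℝ) * a i * x ^ (i - 1) := by
    intro x
    rw [hp, derivative_sum]
    rw [eval_finset_sum]
    apply Finset.sum_congr rfl
    intro i _
    simp [derivative_C_mul, derivative_X_pow]
    ring
  -- the derivative of P is bounded above by K
  set K : ℝ := 5 * ∑ j ∈ Finset.Icc 1 m, (j : ℝ) * b j with hK
  have hbdd : ∀ x : ℝ, (derivative p).eval x ≤ K := by
    intro x
    have h := hder x 1
    simp only [one_pow, mul_one] at h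
    rw [hdev]
    nlinarith [h]
  -- p ≠ 0
  have hpne : p ≠ 0 := by
    intro h
    have := hppos 1 one_ne_zero
    rw [h] at this; simp at this
  -- natDegree p ≤ 1
  have hdeg : p.natDegree ≤ 1 := by
    by_contra hd
    push_neg at hd
    have hd2 : 2 ≤ p.natDegree := hd
    have hdegpos : 0 < p.degree := by
      rw [← natDegree_pos_iff_degree_pos]; omega
    -- leading coefficient of p is positive
    have hlc : 0 < p.leadingCoeff := by
      by_contra hlc
      push_neg at hlc
      have htb := p.tendsto_atBot_of_leadingCoeff_nonpos hdegpos hlc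
      have : ∀ᶠ x : ℝ in atTop, p.eval x < 0 := htb.eventually_lt_atBot 0
      obtain ⟨x, hx1, hx2⟩ := ((this.and (eventually_ge_atTop (1:ℝ))).exists)
      exact absurd (hppos x (by linarith)) (by linarith)
    -- leading coefficient of derivative is positive, degree ≥ 1
    have hdd : (derivative p).degree = ((p.natDegree - 1 : ℕ) : WithBot ℕ) :=
      degree_derivative_eq p (by omega)
    have hddpos : 0 < (derivative p).degree := by
      rw [hdd]
      exact_mod_cast Nat.pos_of_ne_zero (by omega)
    have hnd : (derivative p).natDegree = p.natDegree - 1 :=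
      natDegree_eq_of_degree_eq_some hdd
    have hlcd : (derivative p).leadingCoeff = p.leadingCoeff * p.natDegree := by
      rw [leadingCoeff, hnd, coeff_derivative]
      rw [Nat.sub_add_cancel (by omega)]
      rw [← leadingCoeff]
      push_cast [Nat.cast_sub (by omega : 1 ≤ p.natDegree)]
      ring
    have hlcdpos : 0 < (derivative p).leadingCoeff := by
      rw [hlcd]
      positivity
    have htt := (derivative p).tendsto_atTop_of_leadingCoeff_nonneg hddpos hlcdpos.le
    have : ∀ᶠ x : ℝ in atTop, K < (derivative p).eval x := htt.eventually_gt_atTop K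
    obtain ⟨x, hx⟩ := this.exists
    exact absurd (hbdd x) (by linarith)
  -- p is linear: p = C c₁ * X + C c₀ with c₀ = 0
  have hform := eq_X_add_C_of_natDegree_le_one hdeg
  have h1 := hppos 1 one_ne_zero
  have h2 := hppos (-1) (by norm_num)
  rw [hform] at hp0 h1 h2
  simp at hp0 h1 h2
  linarith
end

section
/- The function V(x) = 2x₀⁴ + 2x₀²x₁² + 3x₀² + 2x₁² + x₂² is a global Lyapunov function for the system ẋ₀ = -7x₀⁵ - 4x₀³x₁² - 5x₀³, ẋ₁ = 7x₀⁴ - 3x₁ - 2x₂, ẋ₂ = -8x₀² - 9x₂: V(0)=0, V(x) > 0 for x ≠ 0, V is radially unbounded, and ∇V(x)·f(x) ≤ 0 for all x ∈ ℝ³. -/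
open Filter

noncomputable section

local notation "E" => EuclideanSpace ℝ (Fin 3)

lemma grad_aux (V : E → ℝ)
    (hV : ∀ x, V x = 2 * (x 0) ^ 4 + 2 * (x 0) ^ 2 * (x 1) ^ 2
      + 3 * (x 0) ^ 2 + 2 * (x 1) ^ 2 + (x 2) ^ 2) (x : E) :
    HasGradientAt V ((EuclideanSpace.equiv (Fin 3) ℝ).symm
      ![8 * (x 0) ^ 3 + 4 * (x 0) * (x 1) ^ 2 + 6 * (x 0),
        4 * (x 0) ^ 2 * (x 1) + 4 * (x 1), 2 * (x 2)]) x := by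
  rw [hasGradientAt_iff_hasFDerivAt]
  have h0 : HasFDerivAt (𝕜 := ℝ) (fun y : E => y 0) (EuclideanSpace.proj (0 : Fin 3)) x := by
    simpa using (EuclideanSpace.proj (𝕜 := ℝ) (0 : Fin 3)).hasFDerivAt (x := x)
  have h1 : HasFDerivAt (𝕜 := ℝ) (fun y : E => y 1) (EuclideanSpace.proj (1 : Fin 3)) x := by
    simpa using (EuclideanSpace.proj (𝕜 := ℝ) (1 : Fin 3)).hasFDerivAt (x := x)
  have h2 : HasFDerivAt (𝕜 := ℝ) (fun y : E => y 2) (EuclideanSpace.proj (2 : Fin 3)) x := by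
    simpa using (EuclideanSpace.proj (𝕜 := ℝ) (2 : Fin 3)).hasFDerivAt (x := x)
  have p2_0 := h0.mul h0
  have p2_1 := h1.mul h1
  have p2_2 := h2.mul h2
  have p4_0 := p2_0.mul p2_0
  have hd := ((((p4_0.const_mul (2:ℝ)).add ((p2_0.const_mul (2:ℝ)).mul p2_1)).add
      (p2_0.const_mul (3:ℝ))).add (p2_1.const_mul (2:ℝ))).add p2_2
  have hVg : V = fun y : E => 2 * (y 0 * y 0 * (y 0 * y 0)) + 2 * (y 0 * y 0) * (y 1 * y 1)
      + 3 * (y 0 * y 0) + 2 * (y 1 * y 1) + y 2 * y 2 := by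
    funext y; rw [hV y]; ring
  rw [hVg]
  refine hd.congr_fderiv ?_
  ext v
  simp [InnerProductSpace.toDual_apply_apply, PiLp.inner_apply, Fin.sum_univ_three]
  ring

/-- `V = 2x₀⁴ + 2x₀²x₁² + 3x₀² + 2x₁² + x₂²` is a global Lyapunov function for
`ẋ₀ = -7x₀⁵-4x₀³x₁²-5x₀³, ẋ₁ = 7x₀⁴-3x₁-2x₂, ẋ₂ = -8x₀²-9x₂`. -/
theorem lyapunov_three_dim_example
    (V : EuclideanSpace ℝ (Fin 3) → ℝ)
    (hV : ∀ x, V x = 2 * (x 0) ^ 4 + 2 * (x 0) ^ 2 * (x 1) ^ 2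
      + 3 * (x 0) ^ 2 + 2 * (x 1) ^ 2 + (x 2) ^ 2)
    (f : EuclideanSpace ℝ (Fin 3) → EuclideanSpace ℝ (Fin 3))
    (hf : ∀ x, f x 0 = -7 * (x 0) ^ 5 - 4 * (x 0) ^ 3 * (x 1) ^ 2 - 5 * (x 0) ^ 3
      ∧ f x 1 = 7 * (x 0) ^ 4 - 3 * (x 1) - 2 * (x 2)
      ∧ f x 2 = -8 * (x 0) ^ 2 - 9 * (x 2)) :
    V 0 = 0 ∧ (∀ x, x ≠ 0 → 0 < V x) ∧
    Tendsto V (comap norm atTop) atTop ∧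
    ∀ x, ∑ i, gradient V x i * f x i ≤ 0 := by
  refine ⟨by simp [hV], ?_, ?_, ?_⟩
  · intro x hx
    rw [hV x]
    have hne : x 0 ≠ 0 ∨ x 1 ≠ 0 ∨ x 2 ≠ 0 := by
      by_contra h
      push_neg at h
      exact hx (by ext i; fin_cases i <;> simp [h.1, h.2.1, h.2.2])
    rcases hne with h | h | h <;>
      nlinarith [sq_nonneg (x 0), sq_nonneg (x 1), sq_nonneg (x 2),
        sq_nonneg ((x 0) ^ 2), sq_nonneg ((x 0) * (x 1)), pow_pos (abs_pos.2 h) 2,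
        sq_abs (x 0), sq_abs (x 1), sq_abs (x 2)]
  · have hle : ∀ x : E, ‖x‖ ^ 2 ≤ V x := by
      intro x
      rw [hV x, EuclideanSpace.norm_eq, Real.sq_sqrt (by positivity)]
      rw [Fin.sum_univ_three]
      simp only [Real.norm_eq_abs, sq_abs]
      nlinarith [sq_nonneg (x 0), sq_nonneg ((x 0) * (x 1)), sq_nonneg ((x 0) ^ 2),
        sq_nonneg (x 1)]
    have h1 : Tendsto (fun x : E => ‖x‖ ^ 2) (comap norm atTop) atTop :=
      (tendsto_pow_atTop (by norm_num)).comp tendsto_comap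
    exact tendsto_atTop_mono hle h1
  · intro x
    have hg := (grad_aux V hV x).gradient
    rw [hg]
    obtain ⟨hf0, hf1, hf2⟩ := hf x
    rw [Fin.sum_univ_three, hf0, hf1, hf2]
    have e0 : ((EuclideanSpace.equiv (Fin 3) ℝ).symm
        ![8 * (x 0) ^ 3 + 4 * (x 0) * (x 1) ^ 2 + 6 * (x 0),
          4 * (x 0) ^ 2 * (x 1) + 4 * (x 1), 2 * (x 2)] : E) 0
        = 8 * (x 0) ^ 3 + 4 * (x 0) * (x 1) ^ 2 + 6 * (x 0) := rfl
    have e1 : ((EuclideanSpace.equiv (Fin 3) ℝ).symm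
        ![8 * (x 0) ^ 3 + 4 * (x 0) * (x 1) ^ 2 + 6 * (x 0),
          4 * (x 0) ^ 2 * (x 1) + 4 * (x 1), 2 * (x 2)] : E) 1
        = 4 * (x 0) ^ 2 * (x 1) + 4 * (x 1) := rfl
    have e2 : ((EuclideanSpace.equiv (Fin 3) ℝ).symm
        ![8 * (x 0) ^ 3 + 4 * (x 0) * (x 1) ^ 2 + 6 * (x 0),
          4 * (x 0) ^ 2 * (x 1) + 4 * (x 1), 2 * (x 2)] : E) 2
        = 2 * (x 2) := rfl
    rw [e0, e1, e2]
    nlinarith [sq_nonneg (x 1 + x 2), sq_nonneg ((x 0) ^ 2 * (x 1) + x 2),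
      sq_nonneg ((x 0) ^ 2 + x 2), sq_nonneg ((x 0) ^ 2 - (x 0) ^ 2 * (x 1)),
      sq_nonneg ((x 0) ^ 3 - (x 0) ^ 3 * (x 1)), sq_nonneg (x 0), sq_nonneg (x 1),
      sq_nonneg (x 2), sq_nonneg ((x 0) ^ 2), sq_nonneg ((x 0) * (x 1)),
      sq_nonneg ((x 0) ^ 2 * (x 1)), sq_nonneg ((x 0) ^ 3 * (x 1)),
      sq_nonneg ((x 0) ^ 3), sq_nonneg ((x 0) ^ 4), sq_nonneg ((x 0) ^ 2 * (x 2))]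

end
end

section
/- The function V(x₀, x₁) = 6x₀⁶ + 7x₀⁴ + x₀³ + 10x₀² + 8x₁² satisfies V(0) = 0, V(x) > 0 for x ≠ 0, and ∇V(x)·f(x) ≤ 0 for all x, where f(x₀,x₁) = (-5x₀³ - 2x₀x₁², -9x₀⁴ + 3x₀³x₁ - 4x₁³). -/
/-!
Positivity: `7t⁴ + t³ + 10t² = (t² + t/2)² + 6t⁴ + 39t²/4`, so `V(x) ≥ x₀² + x₁² = ‖x‖²`.
Decrease: `V` is a sum of functions of one coordinate each, so `∇V·f` is an explicit
polynomial in `(x₀, x₁)`, and minus that polynomial is a sum of squares: the indefinite monomials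
`x₀⁴x₁`, `x₀³x₁²` and `x₀⁵` are absorbed by squares of binomials.
-/

theorem hasGradientAt_sum_comp_apply {ι : Type*} [Fintype ι] {p p' : ι → ℝ → ℝ}
    {x : EuclideanSpace ℝ ι} (hp : ∀ i, HasDerivAt (p i) (p' i (x i)) (x i)) :
    HasGradientAt (fun y : EuclideanSpace ℝ ι => ∑ i, p i (y i))
      (WithLp.toLp 2 fun i => p' i (x i)) x := by
  rw [hasGradientAt_iff_hasFDerivAt]
  have hsum := HasFDerivAt.fun_sum (u := Finset.univ) fun i _ =>
    (hp i).comp_hasFDerivAt x (EuclideanSpace.proj (𝕜 := ℝ) i).hasFDerivAt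
  refine hsum.congr_fderiv (ContinuousLinearMap.ext fun y => ?_)
  simp [PiLp.inner_apply, mul_comm]

theorem sq_add_sq_le_lyapunov (a b : ℝ) :
    a ^ 2 + b ^ 2 ≤ 6 * a ^ 6 + 7 * a ^ 4 + a ^ 3 + 10 * a ^ 2 + 8 * b ^ 2 := by
  nlinarith [sq_nonneg (a ^ 2 + a / 2), pow_two_nonneg (a ^ 3), pow_two_nonneg (a ^ 2),
    sq_nonneg a, sq_nonneg b]

theorem lyapunov_lie_derivative_nonpos (a b : ℝ) :
    (36 * a ^ 5 + 28 * a ^ 3 + 3 * a ^ 2 + 20 * a) * (-5 * a ^ 3 - 2 * a * b ^ 2)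
      + 16 * b * (-9 * a ^ 4 + 3 * a ^ 3 * b - 4 * b ^ 3) ≤ 0 := by
  have hsos : (36 * a ^ 5 + 28 * a ^ 3 + 3 * a ^ 2 + 20 * a) * (-5 * a ^ 3 - 2 * a * b ^ 2)
      + 16 * b * (-9 * a ^ 4 + 3 * a ^ 3 * b - 4 * b ^ 3) =
      -(18 * (2 * a ^ 3 + a * b) ^ 2 + 18 * (2 * a ^ 2 + a ^ 2 * b) ^ 2
        + 21 * (a ^ 2 * b - a * b) ^ 2 + 15 / 2 * (a ^ 3 + a ^ 2) ^ 2
        + 180 * a ^ 8 + 121 / 2 * a ^ 6 + 41 / 2 * a ^ 4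
        + 72 * a ^ 6 * b ^ 2 + 17 * a ^ 4 * b ^ 2 + a ^ 2 * b ^ 2 + 64 * b ^ 4) := by
    ring
  rw [hsos, neg_nonpos]
  positivity

/-- Lyapunov verification for `ẋ₀ = -5x₀³-2x₀x₁², ẋ₁ = -9x₀⁴+3x₀³x₁-4x₁³`
with `V = 6x₀⁶+7x₀⁴+x₀³+10x₀²+8x₁²`. -/
theorem lyapunov_example_deg6
    (V : EuclideanSpace ℝ (Fin 2) → ℝ)
    (hV : ∀ x, V x = 6 * (x 0) ^ 6 + 7 * (x 0) ^ 4 + (x 0) ^ 3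
      + 10 * (x 0) ^ 2 + 8 * (x 1) ^ 2)
    (f : EuclideanSpace ℝ (Fin 2) → EuclideanSpace ℝ (Fin 2))
    (hf : ∀ x, f x 0 = -5 * (x 0) ^ 3 - 2 * (x 0) * (x 1) ^ 2
      ∧ f x 1 = -9 * (x 0) ^ 4 + 3 * (x 0) ^ 3 * (x 1) - 4 * (x 1) ^ 3) :
    V 0 = 0 ∧ (∀ x, x ≠ 0 → 0 < V x) ∧
    ∀ x, ∑ i, gradient V x i * f x i ≤ 0 := by
  refine ⟨by simp [hV], fun x hx => ?_, fun x => ?_⟩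
  · calc 0 < ‖x‖ ^ 2 := by positivity
      _ = x 0 ^ 2 + x 1 ^ 2 := by simp [EuclideanSpace.real_norm_sq_eq, Fin.sum_univ_two]
      _ ≤ V x := hV x ▸ sq_add_sq_le_lyapunov (x 0) (x 1)
  · have hP : HasDerivAt (fun t => 6 * t ^ 6 + 7 * t ^ 4 + t ^ 3 + 10 * t ^ 2)
        (36 * x 0 ^ 5 + 28 * x 0 ^ 3 + 3 * x 0 ^ 2 + 20 * x 0) (x 0) :=
      ((((hasDerivAt_pow 6 (x 0)).const_mul 6).add
      ((hasDerivAt_pow 4 (x 0)).const_mul 7)).add (hasDerivAt_pow 3 (x 0))).add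
      ((hasDerivAt_pow 2 (x 0)).const_mul 10) |>.congr_deriv (by push_cast; ring)
    have hQ : HasDerivAt (fun t => 8 * t ^ 2) (16 * x 1) (x 1) :=
      (hasDerivAt_pow 2 (x 1)).const_mul 8 |>.congr_deriv (by push_cast; ring)
    have hgrad := hasGradientAt_sum_comp_apply
      (p := ![fun t => 6 * t ^ 6 + 7 * t ^ 4 + t ^ 3 + 10 * t ^ 2, fun t => 8 * t ^ 2])
      (p' := ![fun t => 36 * t ^ 5 + 28 * t ^ 3 + 3 * t ^ 2 + 20 * t, fun t => 16 * t])
      (Fin.forall_fin_two.2 ⟨hP, hQ⟩)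
    have hVsum : V = fun y => ∑ i, ![fun t => 6 * t ^ 6 + 7 * t ^ 4 + t ^ 3 + 10 * t ^ 2,
        fun t => 8 * t ^ 2] i (y i) := by
      funext y
      simp [hV, Fin.sum_univ_two, add_assoc]
    rw [hVsum, hgrad.gradient, Fin.sum_univ_two, (hf x).1, (hf x).2]
    simpa using lyapunov_lie_derivative_nonpos (x 0) (x 1)
end
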